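/- arXiv:2105.12150 — 2 statements merged into one kernel-verified Lean document; each statement's English description precedes it below -/
import Mathlib

section
/- In a median graph, two Θ-classes E_i and E_j are orthogonal if and only if the four sets H_i' ∩ H_j', H_i'' ∩ H_j', H_i' ∩ H_j'' and H_i'' ∩ H_j'' are all nonempty (i.e. the splits {H_i',H_i''} and {H_j',H_j''} are incompatible). -/
namespace MedianPaper

variable {V : Type*}

/-- The metric interval `I(u,v)`: vertices on shortest `(u,v)`-paths. -/
def interval (G : SimpleGraph V) (u v : V) : Set V :=
  {w | G.dist u w + G.dist w v = G.dist u v}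

/-- A median graph: a connected graph in which every triple of vertices
has a unique median. -/
def MedianGraph (G : SimpleGraph V) : Prop :=
  G.Connected ∧ ∀ x y z : V, ∃! m : V,
    m ∈ interval G x y ∧ m ∈ interval G y z ∧ m ∈ interval G z x

/-- `u v x y` span a 4-cycle `u-v-y-x-u`, with opposite edge pairs
`(uv, xy)` and `(ux, vy)`. -/
def IsSquare (G : SimpleGraph V) (u v x y : V) : Prop :=
  G.Adj u v ∧ G.Adj x y ∧ G.Adj u x ∧ G.Adj v y ∧ u ≠ y ∧ v ≠ x

/-- Two edges are in relation Θ₀ if they are opposite edges of a common 4-cycle. -/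
def Theta0 (G : SimpleGraph V) (e f : Sym2 V) : Prop :=
  ∃ u v x y : V, IsSquare G u v x y ∧ e = s(u, v) ∧ f = s(x, y)

/-- Θ : the reflexive-transitive closure of Θ₀ on the edges of `G`. -/
def Theta (G : SimpleGraph V) (e f : Sym2 V) : Prop :=
  e ∈ G.edgeSet ∧ f ∈ G.edgeSet ∧ Relation.ReflTransGen (Theta0 G) e f

/-- The Θ-classes of `G`: equivalence classes of edges under Θ. -/
def ThetaClass (G : SimpleGraph V) (C : Set (Sym2 V)) : Prop :=
  ∃ e ∈ G.edgeSet, C = {f | Theta G e f}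

/-- The edge set `C` separates `u` from `v` : they lie in different
components of `G` minus `C`. -/
def Separates (G : SimpleGraph V) (C : Set (Sym2 V)) (u v : V) : Prop :=
  ¬ (G.deleteEdges C).Reachable u v

/-- The signature `σ_{u,v}`: Θ-classes separating `u` from `v`. -/
def signature (G : SimpleGraph V) (u v : V) : Set (Set (Sym2 V)) :=
  {C | ThetaClass G C ∧ Separates G C u v}

/-- `H`, `H'` are the two connected components (halfspaces) of `G` deprived
of the edges in `C`. -/
def IsHalfspacePair (G : SimpleGraph V) (C : Set (Sym2 V)) (H H' : Set V) : Prop :=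
  H.Nonempty ∧ H'.Nonempty ∧ Disjoint H H' ∧ H ∪ H' = Set.univ ∧
  (∀ x ∈ H, ∀ y ∈ H, (G.deleteEdges C).Reachable x y) ∧
  (∀ x ∈ H', ∀ y ∈ H', (G.deleteEdges C).Reachable x y) ∧
  (∀ x ∈ H, ∀ y ∈ H', ¬ (G.deleteEdges C).Reachable x y)

/-- The boundary of a halfspace `H` of the Θ-class `C` : vertices of `H`
incident to an edge of `C`. -/
def boundarySet (G : SimpleGraph V) (C : Set (Sym2 V)) (H : Set V) : Set V :=
  {x | x ∈ H ∧ ∃ y, G.Adj x y ∧ s(x, y) ∈ C}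

/-- Orthogonality of Θ-classes: there is a common square using both. -/
def Orthogonal (G : SimpleGraph V) (C₁ C₂ : Set (Sym2 V)) : Prop :=
  ∃ u v x y : V, IsSquare G u v x y ∧
    s(u, v) ∈ C₁ ∧ s(x, y) ∈ C₁ ∧ s(u, x) ∈ C₂ ∧ s(v, y) ∈ C₂

/-- A pairwise orthogonal family (POF) of Θ-classes. -/
def IsPOF (G : SimpleGraph V) (X : Set (Set (Sym2 V))) : Prop :=
  (∀ C ∈ X, ThetaClass G C) ∧
  ∀ C ∈ X, ∀ C' ∈ X, C ≠ C' → Orthogonal G C C'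

/-- The `k`-dimensional hypercube graph, on subsets of `{1,…,k}`;
two subsets are adjacent iff their symmetric difference has one element. -/
def cubeGraph (k : ℕ) : SimpleGraph (Finset (Fin k)) where
  Adj A B := (symmDiff A B).card = 1
  symm := by
    constructor
    intro A B h
    rwa [symmDiff_comm] at h
  loopless := by
    constructor
    intro A h
    simp [symmDiff_self] at h

/-- `S` induces a hypercube of dimension `k` in `G`. -/
def IsCubeDim (G : SimpleGraph V) (S : Set V) (k : ℕ) : Prop :=
  Nonempty ((G.induce S) ≃g cubeGraph k)

/-- `S` induces a hypercube in `G`. -/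
def IsInducedCube (G : SimpleGraph V) (S : Set V) : Prop :=
  ∃ k, IsCubeDim G S k

/-- The dimension of `G` is `d`: the largest dimension of an induced hypercube. -/
def GraphDim (G : SimpleGraph V) (d : ℕ) : Prop :=
  (∃ S : Set V, IsCubeDim G S d) ∧ ∀ (S : Set V) (k : ℕ), IsCubeDim G S k → k ≤ d

/-- The Θ-classes of the edges of the induced subgraph on `S`. -/
def cubeClasses (G : SimpleGraph V) (S : Set V) : Set (Set (Sym2 V)) :=
  {C | ThetaClass G C ∧ ∃ x ∈ S, ∃ y ∈ S, G.Adj x y ∧ s(x, y) ∈ C}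

/-- With the `v₀`-orientation, `b ∈ S` is the basis of `S`: all edges of `S`
incident to `b` are outgoing from `b`. -/
def IsBasis (G : SimpleGraph V) (v₀ : V) (S : Set V) (b : V) : Prop :=
  b ∈ S ∧ ∀ w ∈ S, G.Adj b w → G.dist v₀ b < G.dist v₀ w

/-- With the `v₀`-orientation, `b ∈ S` is the anti-basis of `S`: all edges of `S`
incident to `b` are ingoing to `b`. -/
def IsAntiBasis (G : SimpleGraph V) (v₀ : V) (S : Set V) (b : V) : Prop :=
  b ∈ S ∧ ∀ w ∈ S, G.Adj b w → G.dist v₀ w < G.dist v₀ b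

/-- `ℰ⁻(v)` : the Θ-classes containing at least one edge ingoing to `v`. -/
def inClasses (G : SimpleGraph V) (v₀ v : V) : Set (Set (Sym2 V)) :=
  {C | ThetaClass G C ∧ ∃ u, G.Adj u v ∧ G.dist v₀ u < G.dist v₀ v ∧ s(u, v) ∈ C}

/-- The ladder set `L_{u,v}`: classes of the signature `σ_{u,v}` having an
edge incident to `u`. -/
def ladder (G : SimpleGraph V) (u v : V) : Set (Set (Sym2 V)) :=
  {C | C ∈ signature G u v ∧ ∃ w, G.Adj u w ∧ s(u, w) ∈ C}

/-- A POF each of whose classes has an edge outgoing from `u`. -/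
def OutgoingPOF (G : SimpleGraph V) (v₀ u : V) (L : Set (Set (Sym2 V))) : Prop :=
  IsPOF G L ∧ ∀ C ∈ L, ∃ w, G.Adj u w ∧ G.dist v₀ u < G.dist v₀ w ∧ s(u, w) ∈ C

/-- A POF each of whose classes has an edge ingoing to `u`. -/
def IngoingPOF (G : SimpleGraph V) (v₀ u : V) (X : Set (Set (Sym2 V))) : Prop :=
  IsPOF G X ∧ ∀ C ∈ X, ∃ w, G.Adj w u ∧ G.dist v₀ w < G.dist v₀ u ∧ s(w, u) ∈ C

/-- `m` is a median of the triple `x, y, z`. -/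
def IsMedian (G : SimpleGraph V) (x y z m : V) : Prop :=
  m ∈ interval G x y ∧ m ∈ interval G y z ∧ m ∈ interval G z x

/-- `b` is the milestone following `a` on the way to `v`: `b` is the anti-basis of
the induced hypercube with basis `a` whose Θ-classes are the ladder set `L_{a,v}`. -/
def NextMilestone (G : SimpleGraph V) (v₀ v a b : V) : Prop :=
  ∃ S : Set V, IsInducedCube G S ∧ IsBasis G v₀ S a ∧ IsAntiBasis G v₀ S b ∧
    cubeClasses G S = ladder G a v

/-- The milestone set `Π(u,v)`: vertices obtained from `u` by iterating the
next-milestone step towards `v`. -/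
def MilestoneSet (G : SimpleGraph V) (v₀ u v : V) : Set V :=
  {p | Relation.ReflTransGen (fun a b => NextMilestone G v₀ v a b) u p}

/-- The penultimate milestone `π̄(u,v)`: the milestone of `Π(u,v)` other than `v`
closest to `v`, i.e. whose next milestone is `v` itself. -/
def IsPenultimate (G : SimpleGraph V) (v₀ u v p : V) : Prop :=
  p ∈ MilestoneSet G v₀ u v ∧ p ≠ v ∧ NextMilestone G v₀ v p v

/-- A convex set of vertices. -/
def ConvexSet (G : SimpleGraph V) (H : Set V) : Prop :=
  ∀ u ∈ H, ∀ v ∈ H, interval G u v ⊆ H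

/-- A gated set of vertices: each vertex has a gate in `H`. -/
def GatedSet (G : SimpleGraph V) (H : Set V) : Prop :=
  ∀ x : V, ∃ g ∈ H, ∀ h ∈ H, g ∈ interval G x h


/-!
In a median graph the halfspaces of the Θ-class of an edge `ab` are `W(a,b) = {w | d(w,a) < d(w,b)}`
and its complement `W(b,a)`: an edge crossing this split is Θ-related to `ab` (Djoković), and
opposite edges of a square induce the same split, so these sets are convex.

A square with edges in both classes has its four corners in the four quadrants of the two splits.
Conversely, if all four quadrants of the splits `S`, `T` are nonempty, take `p ∈ S ∩ Tᶜ` and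
`q ∈ Sᶜ ∩ T` at minimal distance. Medians with points of the two other quadrants give neighbours
`z ∈ S ∩ T` and `n ∈ Sᶜ ∩ Tᶜ` of `p` in `I(p, q)`, and minimality forces `p, q ∈ I(z, n)`. Hence
`d(p, q) = d(p, z) + d(p, n) = 2`, and `z q p n` is a square with edges in both classes.
-/

open SimpleGraph

section Interval

variable {G : SimpleGraph V}

lemma mem_interval_iff {u v w : V} :
    w ∈ interval G u v ↔ G.dist u w + G.dist w v = G.dist u v :=
  Iff.rfl

lemma interval_comm (u v : V) : interval G u v = interval G v u := by
  ext w
  have h₁ : G.dist u w = G.dist w u := dist_comm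
  have h₂ : G.dist v w = G.dist w v := dist_comm
  have h₃ : G.dist u v = G.dist v u := dist_comm
  simp only [mem_interval_iff]
  omega

lemma interval_subset_interval (hG : G.Connected) {u v w : V} (hw : w ∈ interval G u v) :
    interval G u w ⊆ interval G u v := by
  intro z hz
  rw [mem_interval_iff] at *
  have := hG.dist_triangle (u := u) (v := z) (w := v)
  have := hG.dist_triangle (u := z) (v := w) (w := v)
  omega

lemma exists_adj_mem_interval (hG : G.Connected) {u v : V} (huv : u ≠ v) :
    ∃ w, G.Adj u w ∧ w ∈ interval G u v := by
  obtain ⟨p, hp⟩ := hG.exists_walk_length_eq_dist u v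
  cases p with
  | nil => exact absurd rfl huv
  | @cons _ w _ hadj p =>
    rw [Walk.length_cons] at hp
    have := dist_le p
    have := hG.dist_triangle (u := u) (v := w) (w := v)
    rw [dist_eq_one_iff_adj.mpr hadj] at this
    exact ⟨w, hadj, by rw [mem_interval_iff, dist_eq_one_iff_adj.mpr hadj]; omega⟩

end Interval

def halfspace (G : SimpleGraph V) (a b : V) : Set V :=
  {w | G.dist w a < G.dist w b}

section Halfspace

variable {G : SimpleGraph V}

@[simp]
lemma mem_halfspace {a b w : V} : w ∈ halfspace G a b ↔ G.dist w a < G.dist w b :=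
  Iff.rfl

lemma mem_halfspace_self {a b : V} (hab : G.Adj a b) : a ∈ halfspace G a b := by
  simp [dist_eq_one_iff_adj.mpr hab]

lemma MedianGraph.dist_ne_dist_of_adj (hG : MedianGraph G) {a b : V} (hab : G.Adj a b) (w : V) :
    G.dist w a ≠ G.dist w b := by
  intro heq
  obtain ⟨m, ⟨hwa, ham, hbw⟩, -⟩ := hG.2 w a b
  rw [mem_interval_iff, dist_eq_one_iff_adj.mpr hab] at ham
  rw [mem_interval_iff] at hwa hbw
  have hba : G.dist b a = 1 := dist_eq_one_iff_adj.mpr hab.symm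
  have : G.dist b w = G.dist w b := dist_comm
  rcases Nat.eq_zero_or_pos (G.dist a m) with ham' | ham'
  · obtain rfl := hG.1.dist_eq_zero_iff.mp ham'
    have : G.dist a w = G.dist w a := dist_comm
    omega
  · obtain rfl := hG.1.dist_eq_zero_iff.mp (show G.dist m b = 0 by omega)
    omega

lemma MedianGraph.compl_halfspace (hG : MedianGraph G) {a b : V} (hab : G.Adj a b) :
    (halfspace G a b)ᶜ = halfspace G b a := by
  ext w
  have := hG.dist_ne_dist_of_adj hab w
  simp only [Set.mem_compl_iff, mem_halfspace]
  omega

lemma MedianGraph.dist_eq_add_one_of_mem_halfspace (hG : MedianGraph G) {a b w : V}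
    (hab : G.Adj a b) (hw : w ∈ halfspace G a b) : G.dist w b = G.dist w a + 1 := by
  have := hG.1.dist_triangle (u := w) (v := a) (w := b)
  rw [dist_eq_one_iff_adj.mpr hab] at this
  exact le_antisymm this hw

lemma MedianGraph.dist_eq_two_of_adj_of_adj (hG : MedianGraph G) {u v x : V} (huv : G.Adj u v)
    (hux : G.Adj u x) (hvx : v ≠ x) : G.dist v x = 2 := by
  have := hG.1.dist_triangle (u := v) (v := u) (w := x)
  have h₁ : G.dist v u = 1 := dist_eq_one_iff_adj.mpr huv.symm
  have h₂ : G.dist u x = 1 := dist_eq_one_iff_adj.mpr hux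
  have h₃ : G.dist v x ≠ 0 := fun h => hvx (hG.1.dist_eq_zero_iff.mp h)
  have h₄ : G.dist v x ≠ 1 := by
    intro h
    apply hG.dist_ne_dist_of_adj huv x
    rw [dist_comm, h₂, dist_comm, h]
  omega

end Halfspace

section Square

variable {G : SimpleGraph V} {u v x y : V}

lemma IsSquare.symm (h : IsSquare G u v x y) : IsSquare G x y u v :=
  ⟨h.2.1, h.1, h.2.2.1.symm, h.2.2.2.1.symm, h.2.2.2.2.2.symm, h.2.2.2.2.1.symm⟩

lemma IsSquare.transpose (h : IsSquare G u v x y) : IsSquare G u x v y :=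
  ⟨h.2.2.1, h.2.2.2.1, h.1, h.2.1, h.2.2.2.2.1, h.2.2.2.2.2.symm⟩

-- A vertex `w` of `W(u,v) ∩ W(y,x)` would be equidistant from `u` and `y`, making both of them
-- medians of `w, v, x`.
lemma IsSquare.halfspace_subset (hG : MedianGraph G) (hsq : IsSquare G u v x y) :
    halfspace G u v ⊆ halfspace G x y := by
  have hvx := hG.dist_eq_two_of_adj_of_adj hsq.1 hsq.2.2.1 hsq.2.2.2.2.2
  obtain ⟨huv, hxy, hux, hvy, huy, -⟩ := hsq
  intro w hw
  by_contra hwn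
  rw [← Set.mem_compl_iff, hG.compl_halfspace hxy] at hwn
  have hdv := hG.dist_eq_add_one_of_mem_halfspace huv hw
  have hdx := hG.dist_eq_add_one_of_mem_halfspace hxy.symm hwn
  have hux' := hux.diff_dist_adj (u := w)
  have hvy' := hvy.diff_dist_adj (u := w)
  have := hG.dist_ne_dist_of_adj hux w
  have := hG.dist_ne_dist_of_adj hvy w
  have d₁ : G.dist u v = 1 := dist_eq_one_iff_adj.mpr huv
  have d₂ : G.dist v u = 1 := dist_eq_one_iff_adj.mpr huv.symm
  have d₃ : G.dist u x = 1 := dist_eq_one_iff_adj.mpr hux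
  have d₄ : G.dist x u = 1 := dist_eq_one_iff_adj.mpr hux.symm
  have d₅ : G.dist v y = 1 := dist_eq_one_iff_adj.mpr hvy
  have d₆ : G.dist y v = 1 := dist_eq_one_iff_adj.mpr hvy.symm
  have d₇ : G.dist x y = 1 := dist_eq_one_iff_adj.mpr hxy
  have d₈ : G.dist y x = 1 := dist_eq_one_iff_adj.mpr hxy.symm
  have c₁ : G.dist u w = G.dist w u := dist_comm
  have c₂ : G.dist y w = G.dist w y := dist_comm
  have c₃ : G.dist x w = G.dist w x := dist_comm
  apply huy
  refine (hG.2 w v x).unique ⟨?_, ?_, ?_⟩ ⟨?_, ?_, ?_⟩ <;> rw [mem_interval_iff] <;> omega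

lemma IsSquare.halfspace_eq (hG : MedianGraph G) (hsq : IsSquare G u v x y) :
    halfspace G u v = halfspace G x y :=
  (hsq.halfspace_subset hG).antisymm (hsq.symm.halfspace_subset hG)

end Square

section Djokovic

variable {G : SimpleGraph V}

lemma MedianGraph.exists_square_of_crossing (hG : MedianGraph G) {a b p q : V} (hab : G.Adj a b)
    (hpq : G.Adj p q) (hp : p ∈ halfspace G a b) (hq : q ∈ halfspace G b a) (hpa : p ≠ a) :
    ∃ p' q', IsSquare G p' q' p q ∧ p' ∈ halfspace G a b ∧ q' ∈ halfspace G b a ∧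
      G.dist p' a < G.dist p a := by
  have hpb := hG.dist_eq_add_one_of_mem_halfspace hab hp
  have hqa := hG.dist_eq_add_one_of_mem_halfspace hab.symm hq
  have d₁ : G.dist p q = 1 := dist_eq_one_iff_adj.mpr hpq
  have := hG.1.dist_triangle (u := p) (v := q) (w := b)
  have := hG.1.dist_triangle (u := q) (v := p) (w := a)
  have : G.dist q p = 1 := dist_eq_one_iff_adj.mpr hpq.symm
  obtain ⟨p', hpp', hp'I⟩ := exists_adj_mem_interval hG.1 hpa
  rw [mem_interval_iff, dist_eq_one_iff_adj.mpr hpp'] at hp'I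
  have d₂ : G.dist p' p = 1 := dist_eq_one_iff_adj.mpr hpp'.symm
  have d₃ : G.dist p p' = 1 := dist_eq_one_iff_adj.mpr hpp'
  have := hG.1.dist_triangle (u := p) (v := p') (w := b)
  have := hG.1.dist_triangle (u := p') (v := a) (w := b)
  have := hG.1.dist_triangle (u := p') (v := p) (w := q)
  have : G.dist a b = 1 := dist_eq_one_iff_adj.mpr hab
  -- With `k = d(p,a)`: `d(p,b) = d(q,a) = k + 1`, `d(q,b) = d(p',b) = k`, `d(p',a) = k - 1`, so the
  -- median `q'` of `p', q, b` is equidistant from `p'` and `q`, at distance `d(p',q) / 2 = 1`.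
  obtain ⟨q', ⟨h₁, h₂, h₃⟩, -⟩ := hG.2 p' q b
  rw [mem_interval_iff] at h₁ h₂ h₃
  have c₁ : G.dist q q' = G.dist q' q := dist_comm
  have c₂ : G.dist b q' = G.dist q' b := dist_comm
  have c₃ : G.dist b p' = G.dist p' b := dist_comm
  have c₄ : G.dist p' q' = G.dist q' p' := dist_comm
  have hp'q : p' ≠ q := by rintro rfl; omega
  have : G.dist p' q ≠ 0 := fun h => hp'q (hG.1.dist_eq_zero_iff.mp h)
  have hq'q : G.dist q' q = 1 := by omega
  have := hG.1.dist_triangle (u := q) (v := q') (w := a)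
  refine ⟨p', q', ⟨dist_eq_one_iff_adj.mp (by omega), hpq, hpp'.symm,
    dist_eq_one_iff_adj.mp hq'q, hp'q, ?_⟩, mem_halfspace.mpr (by omega),
    mem_halfspace.mpr (by omega), by omega⟩
  rintro rfl
  omega

theorem MedianGraph.theta_of_mem_halfspace (hG : MedianGraph G) {a b p q : V} (hab : G.Adj a b)
    (hpq : G.Adj p q) (hp : p ∈ halfspace G a b) (hq : q ∈ halfspace G b a) :
    Theta G s(a, b) s(p, q) := by
  obtain ⟨k, hk⟩ : ∃ k, G.dist p a = k := ⟨_, rfl⟩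
  induction k using Nat.strong_induction_on generalizing p q with
  | _ k ih =>
    by_cases hpa : p = a
    · subst hpa
      have : G.dist q b = 0 := by
        have := dist_eq_one_iff_adj.mpr hpq.symm
        simp only [mem_halfspace] at hq
        omega
      obtain rfl := hG.1.dist_eq_zero_iff.mp this
      exact ⟨hab, hab, .refl⟩
    · obtain ⟨p', q', hsq, hp', hq', hlt⟩ := hG.exists_square_of_crossing hab hpq hp hq hpa
      have ih' := ih _ (hk ▸ hlt) hsq.1 hp' hq' rfl
      exact ⟨hab, hpq, ih'.2.2.tail ⟨p', q', p, q, hsq, rfl, rfl⟩⟩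

lemma MedianGraph.halfspace_eq_or_of_reflTransGen (hG : MedianGraph G) {a b : V}
    (hab : G.Adj a b) {f : Sym2 V} (h : Relation.ReflTransGen (Theta0 G) s(a, b) f) {p q : V}
    (hf : f = s(p, q)) :
    halfspace G p q = halfspace G a b ∨ halfspace G p q = halfspace G b a := by
  induction h generalizing p q with
  | refl => rcases Sym2.eq_iff.mp hf with ⟨rfl, rfl⟩ | ⟨rfl, rfl⟩ <;> simp
  | tail _ hstep ih =>
    obtain ⟨u, v, x, y, hsq, rfl, rfl⟩ := hstep
    have hxy := (hsq.halfspace_eq hG).symm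
    rcases Sym2.eq_iff.mp hf with ⟨rfl, rfl⟩ | ⟨rfl, rfl⟩
    · exact hxy ▸ ih rfl
    · rw [← hG.compl_halfspace hsq.2.1, hxy]
      rcases ih rfl with h | h
      · exact .inr (h ▸ hG.compl_halfspace hab)
      · exact .inl (h ▸ hG.compl_halfspace hab.symm)

lemma MedianGraph.halfspace_eq_of_crossing (hG : MedianGraph G) {a b p q : V} (hab : G.Adj a b)
    (hpq : G.Adj p q) (hp : p ∈ halfspace G a b) (hq : q ∈ halfspace G b a) :
    halfspace G p q = halfspace G a b := by
  refine (hG.halfspace_eq_or_of_reflTransGen hab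
    (hG.theta_of_mem_halfspace hab hpq hp hq).2.2 rfl).resolve_right fun h => ?_
  have hp' : p ∈ halfspace G b a := h ▸ mem_halfspace_self hpq
  rw [mem_halfspace] at hp hp'
  exact lt_asymm hp hp'

-- Induction on `d(x,z)`: the neighbour `z'` of `z` towards `x` lies in `W(a,b)`; if `z` did
-- not, the edge `z'z` would induce the split of `ab`, and `z` could not lie on a geodesic from
-- `x` to `y`.
theorem MedianGraph.convexSet_halfspace (hG : MedianGraph G) {a b : V} (hab : G.Adj a b) :
    ConvexSet G (halfspace G a b) := by
  intro x hx y hy z hz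
  obtain ⟨k, hk⟩ : ∃ k, G.dist x z = k := ⟨_, rfl⟩
  induction k using Nat.strong_induction_on generalizing z with
  | _ k ih =>
    by_cases hzx : z = x
    · exact hzx ▸ hx
    obtain ⟨z', hzz', hz'I⟩ := exists_adj_mem_interval hG.1 hzx
    rw [interval_comm] at hz'I
    have hz' : z' ∈ halfspace G a b := by
      refine ih _ ?_ (interval_subset_interval hG.1 hz hz'I) rfl
      rw [mem_interval_iff, dist_comm (u := z'), dist_eq_one_iff_adj.mpr hzz'] at hz'I
      omega
    by_contra hzn
    rw [← Set.mem_compl_iff, hG.compl_halfspace hab] at hzn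
    have hyz := hG.dist_eq_add_one_of_mem_halfspace hzz'.symm
      (hG.halfspace_eq_of_crossing hab hzz'.symm hz' hzn ▸ hy)
    rw [mem_interval_iff, dist_comm (u := z'), dist_eq_one_iff_adj.mpr hzz'] at hz'I
    rw [mem_interval_iff] at hz
    have := hG.1.dist_triangle (u := x) (v := z') (w := y)
    have : G.dist z y = G.dist y z := dist_comm
    have : G.dist z' y = G.dist y z' := dist_comm
    omega

end Djokovic

section ThetaClass

variable {G : SimpleGraph V} {C : Set (Sym2 V)}

lemma ThetaClass.adj_of_mem (hC : ThetaClass G C) {a b : V} (h : s(a, b) ∈ C) : G.Adj a b := by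
  obtain ⟨e, -, rfl⟩ := hC
  exact h.2.1

lemma ThetaClass.exists_mem (hC : ThetaClass G C) : ∃ a b, s(a, b) ∈ C := by
  obtain ⟨e, he, rfl⟩ := hC
  induction e using Sym2.ind with
  | _ a b => exact ⟨a, b, he, he, .refl⟩

lemma MedianGraph.mem_thetaClass_of_crossing (hG : MedianGraph G) (hC : ThetaClass G C)
    {a b p q : V} (hab : s(a, b) ∈ C) (hpq : G.Adj p q) (hp : p ∈ halfspace G a b)
    (hq : q ∉ halfspace G a b) : s(p, q) ∈ C := by
  have hab' := hC.adj_of_mem hab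
  rw [← Set.mem_compl_iff, hG.compl_halfspace hab'] at hq
  obtain ⟨e, -, rfl⟩ := hC
  exact ⟨hab.1, hpq, hab.2.2.trans (hG.theta_of_mem_halfspace hab' hpq hp hq).2.2⟩

lemma MedianGraph.mem_halfspace_iff_of_reachable (hG : MedianGraph G) (hC : ThetaClass G C)
    {u v p q : V} (huv : s(u, v) ∈ C) (h : (G.deleteEdges C).Reachable p q) :
    p ∈ halfspace G u v ↔ q ∈ halfspace G u v := by
  rw [reachable_iff_reflTransGen] at h
  induction h with
  | refl => rfl
  | tail _ hadj ih =>
    obtain ⟨hadj, hnot⟩ := deleteEdges_adj.mp hadj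
    refine ih.trans ⟨fun hb => ?_, fun hc => ?_⟩ <;> by_contra hn
    · exact hnot (hG.mem_thetaClass_of_crossing hC huv hadj hb hn)
    · exact hnot (Sym2.eq_swap ▸ hG.mem_thetaClass_of_crossing hC huv hadj.symm hc hn)

end ThetaClass

section HalfspacePair

variable {G : SimpleGraph V} {C : Set (Sym2 V)} {H H' : Set V}

lemma IsHalfspacePair.symm (hH : IsHalfspacePair G C H H') : IsHalfspacePair G C H' H := by
  obtain ⟨hne, hne', hdisj, hunion, hreach, hreach', hsep⟩ := hH
  exact ⟨hne', hne, hdisj.symm, Set.union_comm H H' ▸ hunion, hreach', hreach,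
    fun x hx y hy h => hsep y hy x hx h.symm⟩

lemma IsHalfspacePair.eq_compl (hH : IsHalfspacePair G C H H') : H' = Hᶜ :=
  (IsCompl.of_eq hH.2.2.1.eq_bot hH.2.2.2.1).compl_eq.symm

lemma IsHalfspacePair.eq_of_mem (hH : IsHalfspacePair G C H H') {S : Set V}
    (hS : ∀ p q, (G.deleteEdges C).Reachable p q → (p ∈ S ↔ q ∈ S)) {u v : V} (hu : u ∈ S)
    (hv : v ∉ S) (huH : u ∈ H) : H = S := by
  have hH' := hH.eq_compl
  obtain ⟨-, -, -, -, hreach, hreach', -⟩ := hH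
  have hvH : v ∉ H := fun hvH => hv ((hS u v (hreach u huH v hvH)).mp hu)
  ext w
  refine ⟨fun hw => (hS u w (hreach u huH w hw)).mp hu, fun hw => ?_⟩
  by_contra hwH
  rw [hH'] at hreach'
  exact hv ((hS v w (hreach' v hvH w hwH)).mpr hw)

lemma MedianGraph.isHalfspacePair_eq_or (hG : MedianGraph G) (hC : ThetaClass G C) {u v : V}
    (huv : s(u, v) ∈ C) (hH : IsHalfspacePair G C H H') :
    H = halfspace G u v ∨ H = (halfspace G u v)ᶜ := by
  have hS := fun p q => hG.mem_halfspace_iff_of_reachable hC huv (p := p) (q := q)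
  have hadj := hC.adj_of_mem huv
  have hu := mem_halfspace_self hadj
  have hv : v ∉ halfspace G u v := by
    rw [← Set.mem_compl_iff, hG.compl_halfspace hadj]
    exact mem_halfspace_self hadj.symm
  by_cases huH : u ∈ H
  · exact .inl (hH.eq_of_mem hS hu hv huH)
  · right
    rw [← hH.symm.eq_of_mem hS hu hv (hH.eq_compl ▸ huH), hH.eq_compl, compl_compl]

end HalfspacePair

def Incompatible (S T : Set V) : Prop :=
  (S ∩ T).Nonempty ∧ (Sᶜ ∩ T).Nonempty ∧ (S ∩ Tᶜ).Nonempty ∧ (Sᶜ ∩ Tᶜ).Nonempty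

section Incompatible

variable {G : SimpleGraph V}

lemma incompatible_compl_left {S T : Set V} : Incompatible Sᶜ T ↔ Incompatible S T := by
  simp only [Incompatible, compl_compl]
  tauto

lemma incompatible_compl_right {S T : Set V} : Incompatible S Tᶜ ↔ Incompatible S T := by
  simp only [Incompatible, compl_compl]
  tauto

lemma IsSquare.incompatible (hG : MedianGraph G) {u v x y : V} (hsq : IsSquare G u v x y) :
    Incompatible (halfspace G u v) (halfspace G u x) := by
  have h₁ := hsq.halfspace_eq hG
  have h₂ := hsq.transpose.halfspace_eq hG
  obtain ⟨huv, hxy, hux, hvy, -, -⟩ := hsq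
  refine ⟨⟨u, mem_halfspace_self huv, mem_halfspace_self hux⟩, ⟨v, ?_, ?_⟩, ⟨x, ?_, ?_⟩,
    ⟨y, ?_, ?_⟩⟩
  · exact hG.compl_halfspace huv ▸ mem_halfspace_self huv.symm
  · exact h₂ ▸ mem_halfspace_self hvy
  · exact h₁ ▸ mem_halfspace_self hxy
  · exact hG.compl_halfspace hux ▸ mem_halfspace_self hux.symm
  · rw [h₁, hG.compl_halfspace hxy]
    exact mem_halfspace_self hxy.symm
  · rw [h₂, hG.compl_halfspace hvy]
    exact mem_halfspace_self hvy.symm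

lemma MedianGraph.incompatible_iff_of_isHalfspacePair (hG : MedianGraph G) {C₁ C₂ : Set (Sym2 V)}
    (hC₁ : ThetaClass G C₁) (hC₂ : ThetaClass G C₂) {u v x y : V} (huv : s(u, v) ∈ C₁)
    (hxy : s(x, y) ∈ C₂) {H₁ H₁' H₂ H₂' : Set V} (hH₁ : IsHalfspacePair G C₁ H₁ H₁')
    (hH₂ : IsHalfspacePair G C₂ H₂ H₂') :
    Incompatible H₁ H₂ ↔ Incompatible (halfspace G u v) (halfspace G x y) := by
  rcases hG.isHalfspacePair_eq_or hC₁ huv hH₁ with rfl | rfl <;>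
    rcases hG.isHalfspacePair_eq_or hC₂ hxy hH₂ with rfl | rfl <;>
    simp only [incompatible_compl_left, incompatible_compl_right]

end Incompatible

section ClosestPair

variable {G : SimpleGraph V}

lemma MedianGraph.mem_interval_of_closest (hG : MedianGraph G) {X Y : Set V}
    (hX : ConvexSet G X) (hY : ConvexSet G Y) {p q z n : V} (hqX : q ∈ X) (hqY : q ∈ Y)
    (hn : n ∈ X) (hz : z ∈ Y) (hzI : z ∈ interval G p q)
    (hmin : ∀ m ∈ X, m ∈ Y → G.dist p q ≤ G.dist p m) : q ∈ interval G z n := by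
  obtain ⟨m, ⟨hzn, hnq, hqz⟩, -⟩ := hG.2 z n q
  have hle := hmin m (hX n hn q hqX hnq) (hY q hqY z hz hqz)
  have := hG.1.dist_triangle (u := p) (v := z) (w := m)
  rw [mem_interval_iff] at hzI hqz
  have : G.dist m z = G.dist z m := dist_comm
  have : G.dist z q = G.dist q z := dist_comm
  obtain rfl := hG.1.dist_eq_zero_iff.mp (show G.dist q m = 0 by omega)
  exact hzn

lemma MedianGraph.exists_adj_mem_interval_of_closest (hG : MedianGraph G) {X Y : Set V}
    (hX : ConvexSet G X) (hY : ConvexSet G Y) {p q c : V} (hpX : p ∈ X) (hpY : p ∉ Y)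
    (hqY : q ∈ Y) (hcX : c ∈ X) (hcY : c ∈ Y)
    (hmin : ∀ p' ∈ X, p' ∉ Y → G.dist p q ≤ G.dist p' q) :
    ∃ z, G.Adj p z ∧ z ∈ interval G p q ∧ z ∈ X ∧ z ∈ Y := by
  obtain ⟨m, ⟨hpq, hqc, hcp⟩, -⟩ := hG.2 p q c
  have hmX : m ∈ X := hX c hcX p hpX hcp
  have hmY : m ∈ Y := hY q hqY c hcY hqc
  obtain ⟨z, hpz, hzI⟩ := exists_adj_mem_interval hG.1 (fun h : p = m => hpY (h ▸ hmY))
  have hzX : z ∈ X := hX p hpX m hmX hzI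
  have hzI' := interval_subset_interval hG.1 hpq hzI
  refine ⟨z, hpz, hzI', hzX, ?_⟩
  by_contra hzY
  have := hmin z hzX hzY
  rw [mem_interval_iff, dist_eq_one_iff_adj.mpr hpz] at hzI'
  omega

lemma MedianGraph.dist_add_dist_eq_of_closest (hG : MedianGraph G) {S T : Set V}
    (hS : ConvexSet G S) (hSc : ConvexSet G Sᶜ) (hT : ConvexSet G T) (hTc : ConvexSet G Tᶜ)
    {p q z n : V} (hp : p ∈ S ∩ Tᶜ) (hq : q ∈ Sᶜ ∩ T)
    (hmin : ∀ p' ∈ S ∩ Tᶜ, ∀ q' ∈ Sᶜ ∩ T, G.dist p q ≤ G.dist p' q')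
    (hz : z ∈ S ∩ T) (hn : n ∈ Sᶜ ∩ Tᶜ) (hzI : z ∈ interval G p q) (hnI : n ∈ interval G p q) :
    G.dist p z + G.dist p n = G.dist p q := by
  have hq_zn := hG.mem_interval_of_closest hSc hT hq.1 hq.2 hn.1 hz.2 hzI
    fun m hmS hmT => hmin p hp m ⟨hmS, hmT⟩
  have hp_nz := hG.mem_interval_of_closest hS hTc hp.1 hp.2 hz.1 hn.2
    (interval_comm (G := G) p q ▸ hnI) fun m hmS hmT => by
      rw [dist_comm, dist_comm (u := q)]
      exact hmin m ⟨hmS, hmT⟩ q hq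
  rw [mem_interval_iff] at hzI hnI hq_zn hp_nz
  have : G.dist n p = G.dist p n := dist_comm
  have : G.dist n z = G.dist z n := dist_comm
  have : G.dist q n = G.dist n q := dist_comm
  omega

theorem MedianGraph.exists_square_of_incompatible (hG : MedianGraph G) {S T : Set V}
    (hS : ConvexSet G S) (hSc : ConvexSet G Sᶜ) (hT : ConvexSet G T) (hTc : ConvexSet G Tᶜ)
    (h : Incompatible S T) :
    ∃ u v x y, IsSquare G u v x y ∧
      u ∈ S ∩ T ∧ v ∈ Sᶜ ∩ T ∧ x ∈ S ∩ Tᶜ ∧ y ∈ Sᶜ ∩ Tᶜ := by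
  obtain ⟨⟨c, hc⟩, ⟨q₀, hq₀⟩, ⟨p₀, hp₀⟩, ⟨d, hd⟩⟩ := h
  obtain ⟨⟨p, q⟩, ⟨hp, hq⟩, hmin⟩ :=
    (InvImage.wf (fun e : V × V => G.dist e.1 e.2) wellFounded_lt).has_min
      ((S ∩ Tᶜ) ×ˢ (Sᶜ ∩ T)) ⟨(p₀, q₀), hp₀, hq₀⟩
  dsimp only at hp hq
  replace hmin : ∀ p' ∈ S ∩ Tᶜ, ∀ q' ∈ Sᶜ ∩ T, G.dist p q ≤ G.dist p' q' :=
    fun p' hp' q' hq' => not_lt.mp (hmin (p', q') ⟨hp', hq'⟩)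
  obtain ⟨z, hpz, hzI, hzS, hzT⟩ := hG.exists_adj_mem_interval_of_closest hS hT hp.1 hp.2 hq.2
    hc.1 hc.2 fun p' h₁ h₂ => hmin p' ⟨h₁, h₂⟩ q hq
  obtain ⟨n, hpn, hnI, hnT, hnS⟩ := hG.exists_adj_mem_interval_of_closest hTc hSc hp.2
    (Set.notMem_compl_iff.mpr hp.1) hq.1 hd.2 hd.1
    fun p' h₁ h₂ => hmin p' ⟨Set.notMem_compl_iff.mp h₂, h₁⟩ q hq
  have hsum := hG.dist_add_dist_eq_of_closest hS hSc hT hTc hp hq hmin ⟨hzS, hzT⟩ ⟨hnS, hnT⟩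
    hzI hnI
  rw [mem_interval_iff, dist_eq_one_iff_adj.mpr hpz] at hzI
  rw [mem_interval_iff, dist_eq_one_iff_adj.mpr hpn] at hnI
  rw [dist_eq_one_iff_adj.mpr hpz, dist_eq_one_iff_adj.mpr hpn] at hsum
  have hzq : G.Adj z q := dist_eq_one_iff_adj.mp (by omega)
  have hqn : G.Adj q n := dist_eq_one_iff_adj.mp (by rw [SimpleGraph.dist_comm]; omega)
  refine ⟨z, q, p, n, ⟨hzq, hpn, hpz.symm, hqn, ?_, ?_⟩, ⟨hzS, hzT⟩, hq, hp, ⟨hnS, hnT⟩⟩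
  · rintro rfl
    exact hnT hzT
  · rintro rfl
    exact hq.1 hp.1

end ClosestPair

theorem MedianGraph.orthogonal_of_incompatible {G : SimpleGraph V} (hG : MedianGraph G)
    {C₁ C₂ : Set (Sym2 V)} (hC₁ : ThetaClass G C₁) (hC₂ : ThetaClass G C₂) {a₁ b₁ a₂ b₂ : V}
    (h₁ : s(a₁, b₁) ∈ C₁) (h₂ : s(a₂, b₂) ∈ C₂)
    (h : Incompatible (halfspace G a₁ b₁) (halfspace G a₂ b₂)) :
    Orthogonal G C₁ C₂ := by
  have hab₁ := hC₁.adj_of_mem h₁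
  have hab₂ := hC₂.adj_of_mem h₂
  have hconv₁ := hG.convexSet_halfspace hab₁
  have hconv₂ := hG.convexSet_halfspace hab₂
  have hconv₁' := hG.compl_halfspace hab₁ ▸ hG.convexSet_halfspace hab₁.symm
  have hconv₂' := hG.compl_halfspace hab₂ ▸ hG.convexSet_halfspace hab₂.symm
  obtain ⟨u, v, x, y, hsq, hu, hv, hx, hy⟩ :=
    hG.exists_square_of_incompatible hconv₁ hconv₁' hconv₂ hconv₂' h
  exact ⟨u, v, x, y, hsq, hG.mem_thetaClass_of_crossing hC₁ h₁ hsq.1 hu.1 hv.1,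
    hG.mem_thetaClass_of_crossing hC₁ h₁ hsq.2.1 hx.1 hy.1,
    hG.mem_thetaClass_of_crossing hC₂ h₂ hsq.2.2.1 hu.2 hx.2,
    hG.mem_thetaClass_of_crossing hC₂ h₂ hsq.2.2.2.1 hv.2 hy.2⟩

theorem orthogonal_iff_incompatible_general {V : Type*} (G : SimpleGraph V)
    (hmed : MedianGraph G) (C₁ C₂ : Set (Sym2 V))
    (h₁ : ThetaClass G C₁) (h₂ : ThetaClass G C₂)
    (H₁ H₁' H₂ H₂' : Set V)
    (hH₁ : IsHalfspacePair G C₁ H₁ H₁') (hH₂ : IsHalfspacePair G C₂ H₂ H₂') :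
    Orthogonal G C₁ C₂ ↔
      ((H₁ ∩ H₂).Nonempty ∧ (H₁' ∩ H₂).Nonempty ∧
       (H₁ ∩ H₂').Nonempty ∧ (H₁' ∩ H₂').Nonempty) := by
  obtain rfl := hH₁.eq_compl
  obtain rfl := hH₂.eq_compl
  change Orthogonal G C₁ C₂ ↔ Incompatible H₁ H₂
  constructor
  · rintro ⟨u, v, x, y, hsq, huv, -, hux, -⟩
    exact (hmed.incompatible_iff_of_isHalfspacePair h₁ h₂ huv hux hH₁ hH₂).mpr
      (hsq.incompatible hmed)
  · intro h
    obtain ⟨a₁, b₁, hab₁⟩ := h₁.exists_mem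
    obtain ⟨a₂, b₂, hab₂⟩ := h₂.exists_mem
    exact hmed.orthogonal_of_incompatible h₁ h₂ hab₁ hab₂
      ((hmed.incompatible_iff_of_isHalfspacePair h₁ h₂ hab₁ hab₂ hH₁ hH₂).mp h)

/-- In a median graph, two Θ-classes are orthogonal iff their splits
are incompatible, i.e. the four pairwise intersections of halfspaces are nonempty. -/
theorem orthogonal_iff_incompatible {V : Type*} [Fintype V] (G : SimpleGraph V)
    (hmed : MedianGraph G) (C₁ C₂ : Set (Sym2 V))
    (h₁ : ThetaClass G C₁) (h₂ : ThetaClass G C₂)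
    (H₁ H₁' H₂ H₂' : Set V)
    (hH₁ : IsHalfspacePair G C₁ H₁ H₁') (hH₂ : IsHalfspacePair G C₂ H₂ H₂') :
    Orthogonal G C₁ C₂ ↔
      ((H₁ ∩ H₂).Nonempty ∧ (H₁' ∩ H₂).Nonempty ∧
       (H₁ ∩ H₂').Nonempty ∧ (H₁' ∩ H₂').Nonempty) :=
  orthogonal_iff_incompatible_general G hmed C₁ C₂ h₁ h₂ H₁ H₁' H₂ H₂' hH₁ hH₂

end MedianPaper
end

section
/- In a median graph G with a fixed basepoint v₀, for every vertex v the set ℰ⁻(v) of Θ-classes of edges ingoing to v is a POF, and v together with all its ingoing edges is contained in an induced hypercube of G whose edge Θ-classes are exactly the classes of ℰ⁻(v) and whose anti-basis is v. -/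
/-!
Two distinct lower neighbours `a`, `b` of `v` have `m(v₀, a, b)` as a common lower neighbour, so
the edges `av` and `bv` lie on a square and their Θ-classes are orthogonal.

For the cube, add the lower neighbours of `v` one at a time to a cube embedded isometrically below
`v`. If `u` is a new lower neighbour, `x ↦ m(v₀, x, u)` maps the cube built so far one level down,
and since a median graph has no `K₂,₃` (medians are unique) all distances between the two copies
are those of a cube of one more dimension. Distance one being adjacency, the embedding is an
induced cube; its parallel edges are joined by ladders of squares, so its Θ-classes are the
classes of the edges `uv`.
-/

namespace MedianPaper

variable {V : Type*}

open Finset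
open scoped symmDiff

lemma mem_interval {G : SimpleGraph V} {u v w : V} :
    w ∈ interval G u v ↔ G.dist u w + G.dist w v = G.dist u v := Iff.rfl

section SymmDiff

variable {ι : Type*} [DecidableEq ι]

lemma card_symmDiff_add_card_add_card_mod_two (A B : Finset ι) :
    (#(A ∆ B) + #A + #B) % 2 = 0 := by
  have h₁ := card_union_add_card_inter A B
  have h₂ : #(A ∆ B) + #(A ∩ B) = #(A ∪ B) := by
    rw [symmDiff_eq_sup_sdiff_inf]
    exact card_sdiff_add_card_eq_card inter_subset_union
  omega

lemma card_symmDiff_symmDiff_add_card {A B Y : Finset ι} (hY : Y ⊆ A ∆ B) :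
    #(A ∆ Y ∆ B) + #Y = #(A ∆ B) := by
  rw [symmDiff_right_comm, symmDiff_of_ge hY, card_sdiff_add_card_eq_card hY]

lemma empty_symmDiff (A : Finset ι) : ∅ ∆ A = A := bot_symmDiff A

lemma symmDiff_empty (A : Finset ι) : A ∆ ∅ = A := symmDiff_bot A

lemma symmDiff_subset_of_subset {A X s : Finset ι} (hA : A ⊆ s) (hX : X ⊆ s) : A ∆ X ⊆ s :=
  symmDiff_subset_union.trans (union_subset hA hX)

lemma symmDiff_singleton_of_notMem {A : Finset ι} {i : ι} (hi : i ∉ A) :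
    A ∆ {i} = insert i A := by
  rw [symmDiff_eq_union (disjoint_singleton_right.mpr hi), union_comm, insert_eq]

lemma erase_symmDiff_erase (A B : Finset ι) (i : ι) :
    A.erase i ∆ B.erase i = (A ∆ B).erase i := by
  ext x
  by_cases hx : x = i <;> simp [mem_symmDiff, hx]

lemma card_erase_symmDiff_add_one {A B : Finset ι} {i : ι} (hiA : i ∈ A) (hiB : i ∉ B) :
    #(A.erase i ∆ B) + 1 = #(A ∆ B) := by
  conv_lhs => rw [← erase_eq_of_notMem hiB]
  rw [erase_symmDiff_erase, card_erase_add_one (by simp [mem_symmDiff, hiA, hiB])]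

end SymmDiff

namespace MedianGraph

variable {G : SimpleGraph V}

noncomputable def med (hG : MedianGraph G) (x y z : V) : V :=
  (hG.2 x y z).exists.choose

lemma med_isMedian (hG : MedianGraph G) (x y z : V) : IsMedian G x y z (hG.med x y z) :=
  (hG.2 x y z).exists.choose_spec

lemma eq_med (hG : MedianGraph G) {x y z m : V} (hm : IsMedian G x y z m) :
    m = hG.med x y z :=
  (hG.2 x y z).unique hm (hG.med_isMedian x y z)

lemma dist_ne_of_adj (hG : MedianGraph G) {a b : V} (hab : G.Adj a b) (c : V) :
    G.dist c a ≠ G.dist c b := by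
  obtain ⟨hm₁, hm₂, hm₃⟩ := hG.med_isMedian a b c
  set m := hG.med a b c
  have hd := SimpleGraph.dist_eq_one_iff_adj.mpr hab
  have hm : m = a ∨ m = b := by
    rcases Nat.eq_zero_or_pos (G.dist a m) with h | h
    · exact .inl (hG.1.dist_eq_zero_iff.mp h).symm
    · exact .inr (hG.1.dist_eq_zero_iff.mp (by rw [mem_interval] at hm₁; omega))
  have := G.dist_comm (u := a) (v := b)
  have := G.dist_comm (u := a) (v := c)
  have := G.dist_comm (u := b) (v := c)
  rcases hm with h | h <;> rw [h] at hm₂ hm₃ <;>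
    simp only [mem_interval, SimpleGraph.dist_self] at hm₂ hm₃ <;> omega

lemma dist_eq_add_one_or (hG : MedianGraph G) {a b : V} (hab : G.Adj a b) (c : V) :
    G.dist c b = G.dist c a + 1 ∨ G.dist c a = G.dist c b + 1 := by
  have h₁ : G.dist c b ≤ G.dist c a + G.dist a b := hG.1.dist_triangle
  have h₂ : G.dist c a ≤ G.dist c b + G.dist b a := hG.1.dist_triangle
  have := hG.dist_ne_of_adj hab c
  rw [SimpleGraph.dist_eq_one_iff_adj.mpr hab] at h₁
  rw [SimpleGraph.dist_eq_one_iff_adj.mpr hab.symm] at h₂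
  omega

lemma dist_add_dist_add_dist_mod_two (hG : MedianGraph G) (c x y : V) :
    (G.dist x y + G.dist c x + G.dist c y) % 2 = 0 := by
  obtain ⟨p, hp⟩ := hG.1.exists_walk_length_eq_dist x y
  rw [← hp]
  clear hp
  induction p with
  | nil => simp only [SimpleGraph.Walk.length_nil]; omega
  | cons h p ih =>
    have := hG.dist_eq_add_one_or h c
    simp only [SimpleGraph.Walk.length_cons]
    omega

lemma dist_eq_two_of_adj_of_adj_s6 (hG : MedianGraph G) {a b y c : V} (hab : a ≠ b) (ha : G.Adj a y)
    (hb : G.Adj b y) (hc : G.dist c a = G.dist c b) : G.dist a b = 2 := by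
  have h : G.dist a b ≤ G.dist a y + G.dist y b := hG.1.dist_triangle
  rw [SimpleGraph.dist_eq_one_iff_adj.mpr ha, SimpleGraph.dist_eq_one_iff_adj.mpr hb.symm] at h
  have h₀ : G.dist a b ≠ 0 := fun h => hab (hG.1.dist_eq_zero_iff.mp h)
  have h₁ : G.dist a b ≠ 1 := fun h => hG.dist_ne_of_adj (SimpleGraph.dist_eq_one_iff_adj.mp h) c hc
  omega

/-- No `K₂,₃`: both `p` and `q` are the median of `a`, `b`, `t`. -/
lemma eq_of_adj_of_adj (hG : MedianGraph G) {a b p q t : V} (hab : a ≠ b)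
    (hpa : G.Adj p a) (hpb : G.Adj p b) (hqa : G.Adj q a) (hqb : G.Adj q b)
    (hbt : G.dist b t = G.dist a t) (hpt : G.dist p t + 1 = G.dist a t)
    (hqt : G.dist q t = G.dist p t) : p = q := by
  suffices ∀ x, G.Adj x a → G.Adj x b → G.dist x t + 1 = G.dist a t → x = hG.med a b t from
    (this p hpa hpb hpt).trans (this q hqa hqb (hqt ▸ hpt)).symm
  intro x hxa hxb hxt
  have := G.dist_comm (u := t) (v := a)
  have := G.dist_comm (u := t) (v := b)
  have := G.dist_comm (u := t) (v := x)
  have hd := hG.dist_eq_two_of_adj_of_adj_s6 hab hxa.symm hxb.symm (c := t) (by omega)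
  have hxa' := SimpleGraph.dist_eq_one_iff_adj.mpr hxa
  have hxb' := SimpleGraph.dist_eq_one_iff_adj.mpr hxb
  have := G.dist_comm (u := x) (v := a)
  have := G.dist_comm (u := x) (v := b)
  exact hG.eq_med ⟨by rw [mem_interval]; omega, by rw [mem_interval]; omega,
    by rw [mem_interval]; omega⟩

lemma adj_med_of_adj_of_adj (hG : MedianGraph G) {a b y c : V} (hab : a ≠ b)
    (ha : G.Adj a y) (hb : G.Adj b y) (hay : G.dist c a + 1 = G.dist c y)
    (hby : G.dist c b + 1 = G.dist c y) :
    G.Adj (hG.med c a b) a ∧ G.Adj (hG.med c a b) b ∧ G.dist c (hG.med c a b) + 2 = G.dist c y := by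
  have hd := hG.dist_eq_two_of_adj_of_adj_s6 hab ha hb (c := c) (by omega)
  obtain ⟨hm₁, hm₂, hm₃⟩ := hG.med_isMedian c a b
  set m := hG.med c a b
  rw [mem_interval] at hm₁ hm₂ hm₃
  have := G.dist_comm (u := a) (v := m)
  have := G.dist_comm (u := b) (v := m)
  have := G.dist_comm (u := c) (v := m)
  have := G.dist_comm (u := c) (v := b)
  exact ⟨SimpleGraph.dist_eq_one_iff_adj.mp (by omega),
    SimpleGraph.dist_eq_one_iff_adj.mp (by omega), by omega⟩

end MedianGraph

section Theta

variable {G : SimpleGraph V}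

lemma theta0_symm {e f : Sym2 V} (h : Theta0 G e f) : Theta0 G f e := by
  obtain ⟨u, v, x, y, ⟨huv, hxy, hux, hvy, huy, hvx⟩, rfl, rfl⟩ := h
  exact ⟨x, y, u, v, ⟨hxy, huv, hux.symm, hvy.symm, hvx.symm, huy.symm⟩, rfl, rfl⟩

lemma theta0_of_isSquare {u v x y : V} (h : IsSquare G u v x y) : Theta0 G s(u, v) s(x, y) :=
  ⟨u, v, x, y, h, rfl, rfl⟩

lemma ThetaClass.mem_of_reflTransGen {C : Set (Sym2 V)} (hC : ThetaClass G C) {e f : Sym2 V}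
    (he : e ∈ C) (hef : Relation.ReflTransGen (Theta0 G) e f) (hf : f ∈ G.edgeSet) : f ∈ C := by
  obtain ⟨g, hg, rfl⟩ := hC
  exact ⟨hg, hf, he.2.2.trans hef⟩

lemma ThetaClass.eq_of_mem_of_mem {C C' : Set (Sym2 V)} (hC : ThetaClass G C)
    (hC' : ThetaClass G C') {e : Sym2 V} (he : e ∈ C) (he' : e ∈ C') : C = C' := by
  have : Std.Symm (Theta0 G) := ⟨fun _ _ => theta0_symm⟩
  obtain ⟨g, -, rfl⟩ := hC
  obtain ⟨g', -, rfl⟩ := hC'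
  ext f
  exact ⟨fun hf => ⟨he'.1, hf.2.1, he'.2.2.trans ((Std.Symm.symm _ _ he.2.2).trans hf.2.2)⟩,
    fun hf => ⟨he.1, hf.2.1, he.2.2.trans ((Std.Symm.symm _ _ he'.2.2).trans hf.2.2)⟩⟩

lemma orthogonal_of_adj_of_adj (hG : MedianGraph G) {v₀ v a b : V} {C C' : Set (Sym2 V)}
    (hC : ThetaClass G C) (hC' : ThetaClass G C') (hab : a ≠ b)
    (ha : G.Adj a v) (hb : G.Adj b v) (hav : G.dist v₀ a + 1 = G.dist v₀ v)
    (hbv : G.dist v₀ b + 1 = G.dist v₀ v) (haC : s(a, v) ∈ C) (hbC' : s(b, v) ∈ C') :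
    Orthogonal G C C' := by
  obtain ⟨hza, hzb, hz⟩ := hG.adj_med_of_adj_of_adj hab ha hb hav hbv
  set z := hG.med v₀ a b
  have hvz : v ≠ z := fun h => by rw [← h] at hz; omega
  have sq : IsSquare G a v z b := ⟨ha, hzb, hza.symm, hb.symm, hab, hvz⟩
  have sq' : IsSquare G b v z a := ⟨hb, hza, hzb.symm, ha.symm, hab.symm, hvz⟩
  refine ⟨a, v, z, b, sq, haC, ?_, ?_, Sym2.eq_swap ▸ hbC'⟩
  · exact hC.mem_of_reflTransGen haC (.single (theta0_of_isSquare sq)) hzb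
  · rw [Sym2.eq_swap]
    exact hC'.mem_of_reflTransGen hbC' (.single (theta0_of_isSquare sq')) hza

lemma isPOF_inClasses (hG : MedianGraph G) (v₀ v : V) : IsPOF G (inClasses G v₀ v) := by
  refine ⟨fun C hC => hC.1, ?_⟩
  rintro C ⟨hC, a, ha, hav, haC⟩ C' ⟨hC', b, hb, hbv, hbC'⟩ hne
  have hab : a ≠ b := by
    rintro rfl
    exact hne (hC.eq_of_mem_of_mem hC' haC hbC')
  have := hG.dist_eq_add_one_or ha v₀
  have := hG.dist_eq_add_one_or hb v₀
  exact orthogonal_of_adj_of_adj hG (v₀ := v₀) hC hC' hab ha hb (by omega) (by omega) haC hbC'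

end Theta

lemma dist_le_card_symmDiff_of_adj {ι : Type*} [DecidableEq ι]
    {G : SimpleGraph V} (hG : G.Connected) {s : Finset ι} {f : Finset ι → V}
    (hf : ∀ A ⊆ s, ∀ i ∈ s, G.Adj (f A) (f (A ∆ {i}))) {A B : Finset ι} (hA : A ⊆ s)
    (hB : B ⊆ s) : G.dist (f A) (f B) ≤ #(A ∆ B) := by
  induction h : #(A ∆ B) generalizing A with
  | zero =>
    rw [card_eq_zero, symmDiff_eq_empty] at h
    rw [h, SimpleGraph.dist_self]
  | succ n ih =>
    obtain ⟨i, hi⟩ := card_pos.mp (by omega : 0 < #(A ∆ B))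
    have hiY : {i} ⊆ A ∆ B := singleton_subset_iff.mpr hi
    have hcard := card_symmDiff_symmDiff_add_card hiY
    have hi_s : i ∈ s := symmDiff_subset_of_subset hA hB hi
    have hA' := symmDiff_subset_of_subset hA (singleton_subset_iff.mpr hi_s)
    have h₁ : G.dist (f A) (f B) ≤ G.dist (f A) (f (A ∆ {i})) + G.dist (f (A ∆ {i})) (f B) :=
      hG.dist_triangle
    rw [SimpleGraph.dist_eq_one_iff_adj.mpr (hf A hA i hi_s)] at h₁
    have := ih hA' (by rw [card_singleton] at hcard; omega)
    omega

section DescendingCube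

variable {ι : Type*} [DecidableEq ι]

structure IsDescendingCube (G : SimpleGraph V) (v₀ v : V) (w : ι → V) (s : Finset ι)
    (F : Finset ι → V) : Prop where
  map_empty : F ∅ = v
  map_singleton : ∀ i ∈ s, F {i} = w i
  dist_eq : ∀ A ⊆ s, ∀ B ⊆ s, G.dist (F A) (F B) = #(A ∆ B)
  dist_add_card : ∀ A ⊆ s, G.dist v₀ (F A) + #A = G.dist v₀ v

namespace IsDescendingCube

variable {G : SimpleGraph V} {v₀ v u : V} {w : ι → V} {s : Finset ι} {F : Finset ι → V}

lemma adj_iff (hF : IsDescendingCube G v₀ v w s F) {A B : Finset ι} (hA : A ⊆ s) (hB : B ⊆ s) :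
    G.Adj (F A) (F B) ↔ #(A ∆ B) = 1 := by
  rw [← SimpleGraph.dist_eq_one_iff_adj, hF.dist_eq A hA B hB]

lemma map_eq_iff (hF : IsDescendingCube G v₀ v w s F) {A B : Finset ι} (hA : A ⊆ s)
    (hB : B ⊆ s) : F A = F B ↔ A = B := by
  refine ⟨fun h => ?_, congrArg F⟩
  have hd := hF.dist_eq A hA B hB
  rw [h, SimpleGraph.dist_self, eq_comm, card_eq_zero, symmDiff_eq_empty] at hd
  exact hd

lemma adj_symmDiff_singleton (hF : IsDescendingCube G v₀ v w s F) {A : Finset ι} (hA : A ⊆ s)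
    {i : ι} (hi : i ∈ s) : G.Adj (F A) (F (A ∆ {i})) := by
  rw [hF.adj_iff hA (symmDiff_subset_of_subset hA (singleton_subset_iff.mpr hi)),
    symmDiff_symmDiff_cancel_left, card_singleton]

lemma reflTransGen_theta0 (hF : IsDescendingCube G v₀ v w s F) {A : Finset ι} (hA : A ⊆ s)
    {i : ι} (hi : i ∈ s) : Relation.ReflTransGen (Theta0 G) s(F A, F (A ∆ {i})) s(w i, v) := by
  induction A using Finset.induction_on with
  | empty =>
    rw [empty_symmDiff, hF.map_empty, hF.map_singleton i hi, Sym2.eq_swap]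
  | insert j A hjA ih =>
    have hA' : A ⊆ s := (subset_insert j A).trans hA
    have hj : j ∈ s := hA (mem_insert_self j A)
    have ih := ih hA'
    rw [← symmDiff_singleton_of_notMem hjA] at hA ⊢
    by_cases hji : j = i
    · subst hji
      rwa [symmDiff_symmDiff_cancel_right, Sym2.eq_swap]
    have hAi := symmDiff_subset_of_subset hA' (singleton_subset_iff.mpr hi)
    refine .head (theta0_of_isSquare ⟨hF.adj_symmDiff_singleton hA hi,
      hF.adj_symmDiff_singleton hA' hi, (hF.adj_symmDiff_singleton hA' hj).symm,
      by rw [symmDiff_right_comm]; exact (hF.adj_symmDiff_singleton hAi hj).symm, ?_, ?_⟩) ih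
    · rwa [Ne, hF.map_eq_iff hA hAi, symmDiff_right_inj, singleton_inj]
    · rw [Ne, hF.map_eq_iff (symmDiff_subset_of_subset hA (singleton_subset_iff.mpr hi)) hA',
        symmDiff_assoc, symmDiff_eq_left, bot_eq_empty, symmDiff_eq_empty, singleton_inj]
      exact hji

lemma isCubeDim_range {k : ℕ} {w : Fin k → V} {F : Finset (Fin k) → V}
    (hF : IsDescendingCube G v₀ v w univ F) : IsCubeDim G (Set.range F) k :=
  ⟨(SimpleGraph.Embedding.isoInduceRange
    ⟨⟨F, fun A B h => (hF.map_eq_iff (subset_univ A) (subset_univ B)).mp h⟩,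
      hF.adj_iff (subset_univ _) (subset_univ _)⟩).symm⟩

lemma isAntiBasis_range [Fintype ι] (hF : IsDescendingCube G v₀ v w univ F) :
    IsAntiBasis G v₀ (Set.range F) v := by
  refine ⟨⟨∅, hF.map_empty⟩, ?_⟩
  rintro _ ⟨B, rfl⟩ hB
  rw [← hF.map_empty, hF.adj_iff (empty_subset _) (subset_univ B), empty_symmDiff] at hB
  have := hF.dist_add_card B (subset_univ B)
  omega

lemma cubeClasses_range [Fintype ι] (hF : IsDescendingCube G v₀ v w univ F)
    (hw : ∀ u, G.Adj u v → G.dist v₀ u < G.dist v₀ v → ∃ i, w i = u) :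
    cubeClasses G (Set.range F) = inClasses G v₀ v := by
  ext C
  constructor
  · rintro ⟨hC, _, ⟨A, rfl⟩, _, ⟨B, rfl⟩, hAB, hCAB⟩
    rw [hF.adj_iff (subset_univ A) (subset_univ B), card_eq_one] at hAB
    obtain ⟨i, hi⟩ := hAB
    obtain rfl : B = A ∆ {i} := by rw [← hi, symmDiff_symmDiff_cancel_left]
    have hwi := hF.adj_symmDiff_singleton (empty_subset univ) (mem_univ i)
    rw [empty_symmDiff, hF.map_empty, hF.map_singleton i (mem_univ i)] at hwi
    have hrank := hF.dist_add_card {i} (subset_univ _)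
    rw [hF.map_singleton i (mem_univ i), card_singleton] at hrank
    exact ⟨hC, w i, hwi.symm, by omega, hC.mem_of_reflTransGen hCAB
      (hF.reflTransGen_theta0 (subset_univ A) (mem_univ i)) hwi.symm⟩
  · rintro ⟨hC, u, hu, hlt, huC⟩
    obtain ⟨i, rfl⟩ := hw u hu hlt
    exact ⟨hC, w i, ⟨{i}, hF.map_singleton i (mem_univ i)⟩, v, ⟨∅, hF.map_empty⟩, hu, huC⟩

lemma dist_symmDiff_pair_ne (hG : MedianGraph G) (hF : IsDescendingCube G v₀ v w s F)
    {A : Finset ι} (hA : A ⊆ s) {i j : ι} (hi : i ∈ s) (hj : j ∈ s) (hij : i ≠ j) {t : V}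
    (hjt : G.dist (F (A ∆ {j})) t = G.dist (F (A ∆ {i})) t)
    (hAt : G.dist (F A) t + 1 = G.dist (F (A ∆ {i})) t) :
    G.dist (F (A ∆ {i} ∆ {j})) t ≠ G.dist (F A) t := by
  have hi' : A ∆ {i} ⊆ s := symmDiff_subset_of_subset hA (singleton_subset_iff.mpr hi)
  have hj' : A ∆ {j} ⊆ s := symmDiff_subset_of_subset hA (singleton_subset_iff.mpr hj)
  have hne : F (A ∆ {i}) ≠ F (A ∆ {j}) := by
    rwa [Ne, hF.map_eq_iff hi' hj', symmDiff_right_inj, singleton_inj]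
  have hqj : G.Adj (F (A ∆ {i} ∆ {j})) (F (A ∆ {j})) := by
    rw [symmDiff_right_comm]; exact (hF.adj_symmDiff_singleton hj' hi).symm
  intro heq
  have hsq := hG.eq_of_adj_of_adj hne (hF.adj_symmDiff_singleton hA hi)
    (hF.adj_symmDiff_singleton hA hj) (hF.adj_symmDiff_singleton hi' hj).symm hqj
    hjt hAt heq
  rw [hF.map_eq_iff hA (symmDiff_subset_of_subset hi' (singleton_subset_iff.mpr hj)),
    symmDiff_assoc, eq_comm, symmDiff_eq_left, bot_eq_empty, symmDiff_eq_empty,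
    singleton_inj] at hsq
  exact hij hsq

lemma dist_eq_card_symmDiff_add_one (hG : MedianGraph G) (hF : IsDescendingCube G v₀ v w s F)
    {B : Finset ι} (hB : B ⊆ s) {t : V} (ht : G.Adj (F B) t)
    (hrank : G.dist v₀ t + #B + 1 = G.dist v₀ v) (hout : ∀ A ⊆ s, F A ≠ t) :
    ∀ A ⊆ s, G.dist (F A) t = #(A ∆ B) + 1 := by
  suffices ∀ n, ∀ A ⊆ s, #(A ∆ B) = n → G.dist (F A) t = n + 1 from
    fun A hA => this _ A hA rfl
  intro n
  induction n using Nat.strong_induction_on with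
  | _ n ih =>
  intro A hA hn
  have h₁ : G.dist (F A) t ≤ G.dist (F A) (F B) + G.dist (F B) t := hG.1.dist_triangle
  have h₂ : G.dist (F A) (F B) ≤ G.dist (F A) t + G.dist t (F B) := hG.1.dist_triangle
  have := hF.dist_eq A hA B hB
  have := SimpleGraph.dist_eq_one_iff_adj.mpr ht
  have := SimpleGraph.dist_eq_one_iff_adj.mpr ht.symm
  have := hG.dist_add_dist_add_dist_mod_two v₀ (F A) t
  have := card_symmDiff_add_card_add_card_mod_two A B
  have := hF.dist_add_card A hA
  -- by parity the only alternative is `n - 1`, which a square of the cube towards `B` rules out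
  by_contra hne
  have hlow : G.dist (F A) t + 1 = n := by omega
  have hn2 : 1 < n := by
    by_contra!
    exact hout A hA (hG.1.dist_eq_zero_iff.mp (by omega))
  obtain ⟨i, hi, j, hj, hij⟩ := one_lt_card.mp (hn ▸ hn2)
  have hAB : A ∆ B ⊆ s := symmDiff_subset_of_subset hA hB
  have hdist : ∀ Y ⊆ A ∆ B, 0 < #Y → G.dist (F (A ∆ Y)) t + #Y = n + 1 := fun Y hY hY₀ => by
    have hcard := card_symmDiff_symmDiff_add_card hY
    rw [ih _ (by omega) _ (symmDiff_subset_of_subset hA (hY.trans hAB)) rfl]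
    omega
  have hi' : {i} ⊆ A ∆ B := singleton_subset_iff.mpr hi
  have hj' : {j} ⊆ A ∆ B := singleton_subset_iff.mpr hj
  have hdi := hdist _ hi' (by simp)
  have hdj := hdist _ hj' (by simp)
  have hdij := hdist ({i} ∆ {j}) (symmDiff_subset_of_subset hi' hj') (by simp [hij])
  rw [card_singleton] at hdi hdj
  rw [← symmDiff_assoc, symmDiff_eq_union (disjoint_singleton.mpr hij),
    card_union_of_disjoint (disjoint_singleton.mpr hij), card_singleton, card_singleton] at hdij
  exact hF.dist_symmDiff_pair_ne hG hA (hAB hi) (hAB hj) hij (t := t) (by omega) (by omega)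
    (by omega)

lemma dist_map_eq_card_add_one (hG : MedianGraph G) (hF : IsDescendingCube G v₀ v w s F)
    (hu : G.Adj u v) (hu₀ : G.dist v₀ u + 1 = G.dist v₀ v) (hus : ∀ j ∈ s, w j ≠ u)
    {A : Finset ι} (hA : A ⊆ s) : G.dist (F A) u = #A + 1 := by
  have hout : ∀ A ⊆ s, F A ≠ u := by
    intro A hA hAu
    have hd := hF.dist_eq A hA ∅ (empty_subset s)
    rw [hAu, hF.map_empty, SimpleGraph.dist_eq_one_iff_adj.mpr hu, symmDiff_empty, eq_comm,
      card_eq_one] at hd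
    obtain ⟨j, rfl⟩ := hd
    have hj := singleton_subset_iff.mp hA
    exact hus j hj (hF.map_singleton j hj ▸ hAu)
  have := hF.dist_eq_card_symmDiff_add_one hG (empty_subset s) (t := u)
    (by rw [hF.map_empty]; exact hu.symm) (by rw [card_empty]; omega) hout A hA
  rwa [symmDiff_empty] at this

lemma med_spec (hG : MedianGraph G) (hF : IsDescendingCube G v₀ v w s F)
    (hu : G.Adj u v) (hu₀ : G.dist v₀ u + 1 = G.dist v₀ v) (hus : ∀ j ∈ s, w j ≠ u)
    {A : Finset ι} (hA : A ⊆ s) :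
    G.Adj (F A) (hG.med v₀ (F A) u) ∧ G.dist (hG.med v₀ (F A) u) u = #A ∧
      G.dist v₀ (hG.med v₀ (F A) u) + #A + 1 = G.dist v₀ v := by
  obtain ⟨hm₁, hm₂, hm₃⟩ := hG.med_isMedian v₀ (F A) u
  set m := hG.med v₀ (F A) u
  rw [mem_interval] at hm₁ hm₂ hm₃
  have := hF.dist_map_eq_card_add_one hG hu hu₀ hus hA
  have := hF.dist_add_card A hA
  have := G.dist_comm (u := m) (v := F A)
  have := G.dist_comm (u := m) (v := v₀)
  have := G.dist_comm (u := u) (v := v₀)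
  have := G.dist_comm (u := u) (v := m)
  exact ⟨SimpleGraph.dist_eq_one_iff_adj.mp (by omega), by omega, by omega⟩

lemma adj_med_symmDiff_singleton (hG : MedianGraph G) (hF : IsDescendingCube G v₀ v w s F)
    (hu : G.Adj u v) (hu₀ : G.dist v₀ u + 1 = G.dist v₀ v) (hus : ∀ j ∈ s, w j ≠ u)
    {A : Finset ι} (hA : A ⊆ s) {j : ι} (hj : j ∈ s) :
    G.Adj (hG.med v₀ (F A) u) (hG.med v₀ (F (A ∆ {j})) u) := by
  -- the lower neighbours `F (A ∪ {j})` and `med v₀ (F A) u` of `F A` span a square whose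
  -- fourth vertex turns out to be `med v₀ (F (A ∪ {j})) u`
  suffices key : ∀ A ⊆ s, j ∉ A → G.Adj (hG.med v₀ (F A) u) (hG.med v₀ (F (A ∆ {j})) u) by
    by_cases hjA : j ∈ A
    · have hB := symmDiff_subset_of_subset hA (singleton_subset_iff.mpr hj)
      have := key _ hB (by simp [mem_symmDiff, hjA])
      rwa [symmDiff_symmDiff_cancel_right, SimpleGraph.adj_comm] at this
    · exact key A hA hjA
  intro A hA hjA
  have hB := symmDiff_subset_of_subset hA (singleton_subset_iff.mpr hj)
  have hcard : #(A ∆ {j}) = #A + 1 := by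
    rw [symmDiff_singleton_of_notMem hjA, card_insert_of_notMem hjA]
  obtain ⟨hmA, hmAu, hmA₀⟩ := hF.med_spec hG hu hu₀ hus hA
  set m := hG.med v₀ (F A) u
  have hxu := hF.dist_map_eq_card_add_one hG hu hu₀ hus hB
  have hx₀ := hF.dist_add_card _ hB
  have hne : F (A ∆ {j}) ≠ m := fun h => by rw [h] at hxu; omega
  obtain ⟨hzx, hzm, hz₀⟩ := hG.adj_med_of_adj_of_adj (c := v₀) hne
    (hF.adj_symmDiff_singleton hA hj).symm hmA.symm (by have := hF.dist_add_card A hA; omega)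
    (by have := hF.dist_add_card A hA; omega)
  set z := hG.med v₀ (F (A ∆ {j})) m
  have hzx' := SimpleGraph.dist_eq_one_iff_adj.mpr hzx
  have hzm' := SimpleGraph.dist_eq_one_iff_adj.mpr hzm
  have h₁ : G.dist z u ≤ G.dist z m + G.dist m u := hG.1.dist_triangle
  have h₂ : G.dist (F (A ∆ {j})) u ≤ G.dist (F (A ∆ {j})) z + G.dist z u := hG.1.dist_triangle
  have := hF.dist_add_card A hA
  have := G.dist_comm (u := z) (v := F (A ∆ {j}))
  have := G.dist_comm (u := z) (v := v₀)
  have := G.dist_comm (u := z) (v := u)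
  have := G.dist_comm (u := u) (v := v₀)
  have hz : z = hG.med v₀ (F (A ∆ {j})) u := hG.eq_med
    ⟨by rw [mem_interval]; omega, by rw [mem_interval]; omega, by rw [mem_interval]; omega⟩
  rw [← hz]
  exact hzm.symm

lemma dist_map_med (hG : MedianGraph G) (hF : IsDescendingCube G v₀ v w s F)
    (hu : G.Adj u v) (hu₀ : G.dist v₀ u + 1 = G.dist v₀ v) (hus : ∀ j ∈ s, w j ≠ u)
    {A B : Finset ι} (hA : A ⊆ s) (hB : B ⊆ s) :
    G.dist (F A) (hG.med v₀ (F B) u) = #(A ∆ B) + 1 := by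
  obtain ⟨hmB, hmBu, hmB₀⟩ := hF.med_spec hG hu hu₀ hus hB
  refine hF.dist_eq_card_symmDiff_add_one hG hB hmB hmB₀ (fun A' hA' h => ?_) A hA
  have h₁ := hF.dist_map_eq_card_add_one hG hu hu₀ hus hA'
  have h₂ := hF.dist_add_card A' hA'
  rw [h] at h₁ h₂
  omega

lemma dist_med_med (hG : MedianGraph G) (hF : IsDescendingCube G v₀ v w s F)
    (hu : G.Adj u v) (hu₀ : G.dist v₀ u + 1 = G.dist v₀ v) (hus : ∀ j ∈ s, w j ≠ u)
    {A B : Finset ι} (hA : A ⊆ s) (hB : B ⊆ s) :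
    G.dist (hG.med v₀ (F A) u) (hG.med v₀ (F B) u) = #(A ∆ B) := by
  have hle := dist_le_card_symmDiff_of_adj hG.1 (f := fun A => hG.med v₀ (F A) u)
    (fun A hA j hj => hF.adj_med_symmDiff_singleton hG hu hu₀ hus hA hj) hA hB
  have h : G.dist (F A) (hG.med v₀ (F B) u) ≤
      G.dist (F A) (hG.med v₀ (F A) u) + G.dist (hG.med v₀ (F A) u) (hG.med v₀ (F B) u) :=
    hG.1.dist_triangle
  rw [hF.dist_map_med hG hu hu₀ hus hA hB, SimpleGraph.dist_eq_one_iff_adj.mpr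
    (hF.med_spec hG hu hu₀ hus hA).1] at h
  exact le_antisymm hle (by omega)

lemma extend (hG : MedianGraph G) (hF : IsDescendingCube G v₀ v w s F) {i : ι} (hi : i ∉ s)
    (hu : G.Adj (w i) v) (hu₀ : G.dist v₀ (w i) + 1 = G.dist v₀ v)
    (hus : ∀ j ∈ s, w j ≠ w i) :
    IsDescendingCube G v₀ v w (insert i s)
      (fun A => if i ∈ A then hG.med v₀ (F (A.erase i)) (w i) else F A) := by
  have hsub {A : Finset ι} (hA : A ⊆ insert i s) : A.erase i ⊆ s := subset_insert_iff.mp hA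
  have hsub' {A : Finset ι} (hA : A ⊆ insert i s) (hiA : i ∉ A) : A ⊆ s :=
    (subset_insert_iff_of_notMem hiA).mp hA
  have hmed_empty : hG.med v₀ (F ∅) (w i) = w i := by
    have := SimpleGraph.dist_eq_one_iff_adj.mpr hu
    have := SimpleGraph.dist_eq_one_iff_adj.mpr hu.symm
    rw [hF.map_empty]
    refine (hG.eq_med ⟨?_, ?_, ?_⟩).symm <;>
      simp only [mem_interval, SimpleGraph.dist_self, G.dist_comm (u := w i) (v := v₀)] <;> omega
  refine ⟨?_, fun j hj => ?_, fun A hA B hB => ?_, fun A hA => ?_⟩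
  · simp [hF.map_empty]
  · rcases mem_insert.mp hj with rfl | hj
    · simpa using hmed_empty
    · have hij : i ∉ ({j} : Finset ι) := by
        rw [mem_singleton]; rintro rfl; exact hi hj
      simp only [hij, if_false, hF.map_singleton j hj]
  · by_cases hiA : i ∈ A <;> by_cases hiB : i ∈ B <;> simp only [hiA, hiB, if_true, if_false]
    · rw [hF.dist_med_med hG hu hu₀ hus (hsub hA) (hsub hB), erase_symmDiff_erase,
        erase_eq_of_notMem (by simp [mem_symmDiff, hiA, hiB])]
    · rw [G.dist_comm, hF.dist_map_med hG hu hu₀ hus (hsub' hB hiB) (hsub hA), symmDiff_comm,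
        card_erase_symmDiff_add_one hiA hiB]
    · rw [hF.dist_map_med hG hu hu₀ hus (hsub' hA hiA) (hsub hB), symmDiff_comm,
        card_erase_symmDiff_add_one hiB hiA, symmDiff_comm]
    · exact hF.dist_eq A (hsub' hA hiA) B (hsub' hB hiB)
  · by_cases hiA : i ∈ A <;> simp only [hiA, if_true, if_false]
    · have := (hF.med_spec hG hu hu₀ hus (hsub hA)).2.2
      have := card_erase_add_one hiA
      omega
    · exact hF.dist_add_card A (hsub' hA hiA)

end IsDescendingCube

lemma exists_isDescendingCube {ι : Type*} [DecidableEq ι] {G : SimpleGraph V}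
    (hG : MedianGraph G) (v₀ v : V) (w : ι → V) (s : Finset ι) (hw : Set.InjOn w s)
    (hadj : ∀ i ∈ s, G.Adj (w i) v) (hrank : ∀ i ∈ s, G.dist v₀ (w i) + 1 = G.dist v₀ v) :
    ∃ F, IsDescendingCube G v₀ v w s F := by
  induction s using Finset.induction_on with
  | empty =>
    refine ⟨fun _ => v, rfl, by simp, fun A hA B hB => ?_, fun A hA => ?_⟩ <;>
      simp_all [subset_empty]
  | insert i s hi ih =>
    obtain ⟨F, hF⟩ := ih (hw.mono (by simp)) (fun j hj => hadj j (mem_insert_of_mem hj))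
      (fun j hj => hrank j (mem_insert_of_mem hj))
    refine ⟨_, hF.extend hG hi (hadj i (mem_insert_self i s)) (hrank i (mem_insert_self i s))
      fun j hj hji => hi ?_⟩
    rwa [← hw (by simp [hj]) (by simp) hji]

end DescendingCube

/-- In a median graph with basepoint `v₀`, for every vertex `v` the
set `ℰ⁻(v)` of Θ-classes of ingoing edges is a POF, and `v` together with all
its ingoing edges lies in an induced hypercube with Θ-classes exactly `ℰ⁻(v)`
and anti-basis `v`. -/
theorem inClasses_pof_and_cube {V : Type*} [Fintype V] (G : SimpleGraph V)
    (hmed : MedianGraph G) (v₀ v : V) :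
    IsPOF G (inClasses G v₀ v) ∧
    ∃ S : Set V, IsInducedCube G S ∧ v ∈ S ∧
      (∀ u, G.Adj u v → G.dist v₀ u < G.dist v₀ v → u ∈ S) ∧
      cubeClasses G S = inClasses G v₀ v ∧
      IsAntiBasis G v₀ S v := by
  classical
  let W : Finset V := {u | G.Adj u v ∧ G.dist v₀ u < G.dist v₀ v}
  let w : Fin #W → V := fun i => W.equivFin.symm i
  have hwW (i : Fin #W) : G.Adj (w i) v ∧ G.dist v₀ (w i) < G.dist v₀ v :=
    (mem_filter.mp (W.equivFin.symm i).2).2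
  have hw_surj (u : V) (hu : G.Adj u v) (hlt : G.dist v₀ u < G.dist v₀ v) : ∃ i, w i = u :=
    ⟨W.equivFin ⟨u, by simp [W, hu, hlt]⟩, by simp [w]⟩
  obtain ⟨F, hF⟩ := exists_isDescendingCube hmed v₀ v w univ
    (Subtype.val_injective.comp W.equivFin.symm.injective).injOn (fun i _ => (hwW i).1)
    (fun i _ => by have := hmed.dist_eq_add_one_or (hwW i).1 v₀; have := (hwW i).2; omega)
  refine ⟨isPOF_inClasses hmed v₀ v, Set.range F, ⟨_, hF.isCubeDim_range⟩, ⟨∅, hF.map_empty⟩,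
    fun u hu hlt => ?_, hF.cubeClasses_range hw_surj, hF.isAntiBasis_range⟩
  obtain ⟨i, rfl⟩ := hw_surj u hu hlt
  exact ⟨{i}, hF.map_singleton i (mem_univ i)⟩

end MedianPaper
end
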